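/- arXiv:1602.01132 — 3 statements merged into one kernel-verified Lean document; each statement's English description precedes it below -/
import Mathlib

section
/- Let α ∈ (0, 1/2) and p ∈ (0, α²/2). Let X₁, X₂, … be independent Bernoulli random variables with P[Xᵢ = 1] ≤ p for every i. Let I be a random positive integer, which may depend arbitrarily on the entire sequence X₁, X₂, … (i.e., I is measurable with respect to the σ-algebra generated by the whole sequence together with possible auxiliary randomness). If P[X_I = 1] ≥ α, then E[I] ≥ α²/(2p). -/
open MeasureTheory ProbabilityTheory
open scoped ENNReal

/-- Lemma A.1: if `X₁, X₂, …` are independent Bernoulli random variables each with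
success probability at most `p`, and `I` is any random positive index (possibly depending
on the whole sequence) such that `P[X_I = 1] ≥ α`, then `E[I] ≥ α²/(2p)`. -/
theorem stmt_0 {Ω : Type*} [MeasurableSpace Ω] (μ : Measure Ω) [IsProbabilityMeasure μ]
    (α p : ℝ) (hα : α ∈ Set.Ioo (0 : ℝ) (1 / 2)) (hp : p ∈ Set.Ioo (0 : ℝ) (α ^ 2 / 2))
    (X : ℕ → Ω → Bool) (hXmeas : ∀ i, Measurable (X i))
    (hindep : iIndepFun X μ)
    (hXp : ∀ i, (μ {ω | X i ω = true}).toReal ≤ p)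
    (I : Ω → ℕ) (hImeas : Measurable I) (hIpos : ∀ ω, 1 ≤ I ω)
    (hsel : α ≤ (μ {ω | X (I ω) ω = true}).toReal) :
    ENNReal.ofReal (α ^ 2 / (2 * p)) ≤ ∫⁻ ω, (I ω : ℝ≥0∞) ∂μ := by
  obtain ⟨hα0, hα2⟩ := hα
  obtain ⟨hp0, hp2⟩ := hp
  have hpα : p < α := by nlinarith
  set M := Nat.floor (α / p) with hMdef
  have hdivpos : 0 ≤ α / p := by positivity
  have hM1 : 1 ≤ M := Nat.le_floor (by rw [le_div_iff₀ hp0]; simpa using hpα.le)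
  have hMle : (M : ℝ) ≤ α / p := Nat.floor_le hdivpos
  have hMgt : α / p < M + 1 := Nat.lt_floor_add_one _
  have hMple : (M : ℝ) * p ≤ α := by rwa [← le_div_iff₀ hp0]
  -- measurability of B N
  have hBmeas : ∀ N : ℕ, MeasurableSet {ω | N + 1 ≤ I ω} := by
    intro N
    exact hImeas measurableSet_Ici
  -- per-N bound
  have key : ∀ N, N < M → ENNReal.ofReal (α - N * p) ≤ μ {ω | N + 1 ≤ I ω} := by
    intro N hN
    have hsub : {ω | X (I ω) ω = true} ⊆
        {ω | N + 1 ≤ I ω} ∪ ⋃ i ∈ Finset.Icc 1 N, {ω | X i ω = true} := by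
      intro ω hω
      by_cases h : N + 1 ≤ I ω
      · exact Or.inl h
      · right
        refine Set.mem_biUnion ?_ hω
        exact Finset.mem_Icc.mpr ⟨hIpos ω, Nat.lt_succ_iff.mp (not_le.mp h)⟩
    have h1 : μ {ω | X (I ω) ω = true} ≤
        μ {ω | N + 1 ≤ I ω} + ∑ i ∈ Finset.Icc 1 N, μ {ω | X i ω = true} :=
      (measure_mono hsub).trans ((measure_union_le _ _).trans
        (add_le_add le_rfl (measure_biUnion_finset_le _ _)))
    have h2 : (μ {ω | X (I ω) ω = true}).toReal ≤
        (μ {ω | N + 1 ≤ I ω}).toReal + ∑ i ∈ Finset.Icc 1 N, (μ {ω | X i ω = true}).toReal := by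
      have := ENNReal.toReal_mono (a := μ {ω | X (I ω) ω = true}) ?_ h1
      · rwa [ENNReal.toReal_add (measure_ne_top _ _)
          (ENNReal.sum_ne_top.mpr fun i _ => measure_ne_top _ _),
          ENNReal.toReal_sum (fun i _ => measure_ne_top _ _)] at this
      · exact ENNReal.add_ne_top.mpr ⟨measure_ne_top _ _,
          ENNReal.sum_ne_top.mpr fun i _ => measure_ne_top _ _⟩
    have h3 : ∑ i ∈ Finset.Icc 1 N, (μ {ω | X i ω = true}).toReal ≤ N * p := by
      calc ∑ i ∈ Finset.Icc 1 N, (μ {ω | X i ω = true}).toReal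
          ≤ ∑ i ∈ Finset.Icc 1 N, p := Finset.sum_le_sum (fun i _ => hXp i)
        _ = N * p := by rw [Finset.sum_const, Nat.card_Icc]; simp [nsmul_eq_mul]
    have h4 : α - N * p ≤ (μ {ω | N + 1 ≤ I ω}).toReal := by linarith [hsel, h2, h3]
    calc ENNReal.ofReal (α - N * p) ≤ ENNReal.ofReal ((μ {ω | N + 1 ≤ I ω}).toReal) :=
          ENNReal.ofReal_le_ofReal h4
      _ = μ {ω | N + 1 ≤ I ω} := ENNReal.ofReal_toReal (measure_ne_top _ _)
  -- pointwise bound on I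
  have hpoint : ∀ ω, ∑ N ∈ Finset.range M, ({ω | N + 1 ≤ I ω}.indicator (fun _ => (1:ℝ≥0∞)) ω)
      ≤ (I ω : ℝ≥0∞) := by
    intro ω
    have : ∑ N ∈ Finset.range M, ({ω | N + 1 ≤ I ω}.indicator (fun _ => (1:ℝ≥0∞)) ω)
        = ∑ N ∈ Finset.range M, (if N < I ω then (1:ℝ≥0∞) else 0) := by
      refine Finset.sum_congr rfl fun N _ => ?_
      simp [Set.indicator_apply, Nat.succ_le_iff]
    rw [this, Finset.sum_boole]
    have hsub : (Finset.range M).filter (fun N => N < I ω) ⊆ Finset.range (I ω) := by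
      intro x hx
      simp only [Finset.mem_filter, Finset.mem_range] at hx ⊢
      exact hx.2
    have := Finset.card_le_card hsub
    rw [Finset.card_range] at this
    exact_mod_cast Nat.cast_le.mpr this
  -- integrate
  have hint : ∑ N ∈ Finset.range M, μ {ω | N + 1 ≤ I ω} ≤ ∫⁻ ω, (I ω : ℝ≥0∞) ∂μ := by
    calc ∑ N ∈ Finset.range M, μ {ω | N + 1 ≤ I ω}
        = ∑ N ∈ Finset.range M, ∫⁻ ω, ({ω | N + 1 ≤ I ω}.indicator (fun _ => (1:ℝ≥0∞)) ω) ∂μ := by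
          refine Finset.sum_congr rfl fun N _ => ?_
          exact (lintegral_indicator_one (hBmeas N)).symm
      _ = ∫⁻ ω, ∑ N ∈ Finset.range M, ({ω | N + 1 ≤ I ω}.indicator (fun _ => (1:ℝ≥0∞)) ω) ∂μ := by
          rw [lintegral_finset_sum]
          intro N _
          exact (measurable_one.indicator (hBmeas N))
      _ ≤ ∫⁻ ω, (I ω : ℝ≥0∞) ∂μ := lintegral_mono hpoint
  -- nonnegativity of terms
  have hnonneg : ∀ N ∈ Finset.range M, 0 ≤ α - (N : ℝ) * p := by
    intro N hN
    have hNM : (N : ℝ) ≤ (M : ℝ) - 1 := by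
      have : N + 1 ≤ M := Finset.mem_range.mp hN
      have := Nat.cast_le (α := ℝ).mpr this
      push_cast at this
      linarith
    nlinarith
  -- Gauss sum
  have hgauss : ∑ N ∈ Finset.range M, (N : ℝ) = M * (M - 1) / 2 := by
    induction M with
    | zero => simp
    | succ n ih =>
      rw [Finset.sum_range_succ, ih]
      push_cast
      ring
  -- final real inequality
  have hreal : α ^ 2 / (2 * p) ≤ ∑ N ∈ Finset.range M, (α - (N : ℝ) * p) := by
    rw [Finset.sum_sub_distrib, Finset.sum_const, Finset.card_range, ← Finset.sum_mul, hgauss]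
    simp only [nsmul_eq_mul]
    rw [div_le_iff₀ (by positivity)]
    have hMp : p ≤ (M : ℝ) * p := by
      have : (1:ℝ) ≤ M := by exact_mod_cast hM1
      nlinarith
    have hMgt' : α - p < (M : ℝ) * p := by
      have := hMgt
      rw [div_lt_iff₀ hp0] at this
      nlinarith
    nlinarith [sq_nonneg (α - (M:ℝ)*p), mul_nonneg (sub_nonneg.mpr hMple) (sub_nonneg.mpr hMple), mul_pos hp0 hp0, mul_nonneg (sub_nonneg.mpr hMple) hp0.le]
  calc ENNReal.ofReal (α ^ 2 / (2 * p))
      ≤ ENNReal.ofReal (∑ N ∈ Finset.range M, (α - (N : ℝ) * p)) :=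
        ENNReal.ofReal_le_ofReal hreal
    _ = ∑ N ∈ Finset.range M, ENNReal.ofReal (α - (N : ℝ) * p) :=
        ENNReal.ofReal_sum_of_nonneg hnonneg
    _ ≤ ∑ N ∈ Finset.range M, μ {ω | N + 1 ≤ I ω} :=
        Finset.sum_le_sum fun N hN => key N (Finset.mem_range.mp hN)
    _ ≤ ∫⁻ ω, (I ω : ℝ≥0∞) ∂μ := hint
end

section
/- For every α ∈ (0, 1/2) and every p ∈ (0, α²/2], the inequality 1 + ((1−α)/(1−p)) · (log(1−α)/2 − 1) ≥ α²/2 holds, where log denotes the natural logarithm. -/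
/-- For every `α ∈ (0, 1/2)` and `p ∈ (0, α²/2]`,
`1 + ((1−α)/(1−p)) · (log(1−α)/2 − 1) ≥ α²/2`. -/
theorem stmt_3 (α p : ℝ) (hα : α ∈ Set.Ioo (0 : ℝ) (1 / 2))
    (hp : p ∈ Set.Ioc (0 : ℝ) (α ^ 2 / 2)) :
    α ^ 2 / 2 ≤ 1 + (1 - α) / (1 - p) * (Real.log (1 - α) / 2 - 1) := by
  obtain ⟨ha0, ha1⟩ := hα
  obtain ⟨hp0, hp1⟩ := hp
  have h1a : (0:ℝ) < 1 - α := by linarith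
  have h1p : (0:ℝ) < 1 - p := by nlinarith
  have hlog : 1 - (1 - α)⁻¹ ≤ Real.log (1 - α) :=
    Real.one_sub_inv_le_log_of_pos h1a
  have hL : -α ≤ (1 - α) * Real.log (1 - α) := by
    have := mul_le_mul_of_nonneg_left hlog h1a.le
    have hinv : (1 - α) * ((1:ℝ) - (1 - α)⁻¹) = -α := by
      field_simp
      ring
    nlinarith [this]
  set L := Real.log (1 - α) with hLdef
  have key : α ^ 2 / 2 * (1 - p) ≤ (1 - p) + (1 - α) * (L / 2 - 1) := by
    nlinarith [hL, sq_nonneg α]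
  calc α ^ 2 / 2 = (α ^ 2 / 2 * (1 - p)) / (1 - p) := by field_simp
    _ ≤ ((1 - p) + (1 - α) * (L / 2 - 1)) / (1 - p) :=
        by gcongr
    _ = 1 + (1 - α) / (1 - p) * (L / 2 - 1) := by rw [add_div, div_self h1p.ne']; ring
end

section
/- Let m and q be integers with 2 ≤ q ≤ m, let ε ≥ 0 be a real number, and let n₁, …, n_{q−1} be arbitrary real numbers. Then the number of permutations σ of {1, …, m−1} for which there exists a permutation σ' of {1, …, q−1} such that |σ⁻¹(i) − n_{σ'(i)}| ≤ ε for all i ∈ {1, …, q−1} is at most ((q−1)(2ε+1))^{q−1} · (m−q)!. -/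
open Finset

lemma interval_card_aux (N : ℕ) (c ε : ℝ) (hε : 0 ≤ ε) [DecidablePred fun x : Fin N => |((x:ℕ):ℝ) + 1 - c| ≤ ε] :
    ((Finset.univ.filter (fun x : Fin N => |((x:ℕ):ℝ) + 1 - c| ≤ ε)).card : ℝ) ≤ 2*ε + 1 := by
  have h1 : (Finset.univ.filter (fun x : Fin N => |((x:ℕ):ℝ) + 1 - c| ≤ ε)).card
      ≤ (Finset.Icc ⌈c - ε⌉ ⌊c + ε⌋).card := by
    refine Finset.card_le_card_of_injOn (fun x => ((x:ℕ):ℤ) + 1) ?_ ?_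
    · intro x hx
      simp only [mem_coe, mem_filter, mem_univ, true_and] at hx
      rw [abs_le] at hx
      rw [Finset.mem_coe, Finset.mem_Icc]
      constructor
      · rw [Int.ceil_le]; push_cast; linarith [hx.1]
      · rw [Int.le_floor]; push_cast; linarith [hx.2]
    · intro x hx y hy hxy
      have hxy' : ((x:ℕ):ℤ) = ((y:ℕ):ℤ) := by simpa using hxy
      have : (x:ℕ) = (y:ℕ) := by exact_mod_cast hxy'
      exact Fin.ext this
  have h2 : ((Finset.Icc ⌈c - ε⌉ ⌊c + ε⌋).card : ℝ) ≤ 2*ε + 1 := by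
    rcases le_or_gt ⌈c - ε⌉ ⌊c + ε⌋ with h | h
    · rw [Int.card_Icc]
      have hz : (0:ℤ) ≤ ⌊c + ε⌋ + 1 - ⌈c - ε⌉ := by omega
      have he : (((⌊c + ε⌋ + 1 - ⌈c - ε⌉).toNat : ℕ) : ℝ) = (⌊c + ε⌋:ℝ) + 1 - (⌈c - ε⌉:ℝ) := by
        rw [← Int.cast_natCast, Int.toNat_of_nonneg hz]; push_cast; ring
      rw [he]
      have := Int.floor_le (c + ε)
      have := Int.le_ceil (c - ε)
      linarith
    · rw [Finset.Icc_eq_empty (by omega)]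
      simp; linarith
  calc ((Finset.univ.filter (fun x : Fin N => |((x:ℕ):ℝ) + 1 - c| ≤ ε)).card : ℝ)
      ≤ ((Finset.Icc ⌈c - ε⌉ ⌊c + ε⌋).card : ℝ) := by exact_mod_cast h1
    _ ≤ 2*ε + 1 := h2
open Finset

lemma subtype_card_aux (N k : ℕ) (hk : k ≤ N) :
    Fintype.card {a : Fin N // k ≤ (a : ℕ)} = N - k := by
  have e : {a : Fin N // k ≤ (a : ℕ)} ≃ Fin (N - k) :=
    { toFun := fun a => ⟨(a : Fin N) - k, by omega⟩
      invFun := fun j => ⟨⟨k + (j : ℕ), by omega⟩, by simp⟩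
      left_inv := fun a => by ext; simp; omega
      right_inv := fun j => by ext; simp }
  rw [Fintype.card_congr e, Fintype.card_fin]

lemma fiber_card_aux (N k : ℕ) (hk : k ≤ N) (g : Fin k → Fin N) :
    (Finset.univ.filter
      (fun τ : Equiv.Perm (Fin N) => ∀ i, τ (Fin.castLE hk i) = g i)).card
      ≤ (N - k).factorial := by
  classical
  set s := Finset.univ.filter
      (fun τ : Equiv.Perm (Fin N) => ∀ i, τ (Fin.castLE hk i) = g i) with hs
  rcases s.eq_empty_or_nonempty with h | ⟨τ₀, hτ₀⟩
  · simp [h]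
  have hτ₀' : ∀ i, τ₀ (Fin.castLE hk i) = g i := by
    rw [hs, mem_filter] at hτ₀; exact hτ₀.2
  -- for τ in s, π := τ₀⁻¹ * τ fixes low part
  have hfixlow : ∀ τ ∈ s, ∀ a : Fin N, (a : ℕ) < k → (τ₀⁻¹ * τ) a = a := by
    intro τ hτ a ha
    rw [hs, mem_filter] at hτ
    have h1 : τ (Fin.castLE hk ⟨(a : ℕ), ha⟩) = g ⟨(a : ℕ), ha⟩ := hτ.2 _
    have h2 : τ₀ (Fin.castLE hk ⟨(a : ℕ), ha⟩) = g ⟨(a : ℕ), ha⟩ := hτ₀' _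
    have ha' : a = Fin.castLE hk ⟨(a : ℕ), ha⟩ := by ext; simp
    show τ₀⁻¹ (τ a) = a
    rw [ha', h1, ← h2, Equiv.Perm.inv_def, Equiv.symm_apply_apply]
  have hfix : ∀ τ ∈ s, ∀ a : Fin N, k ≤ (a : ℕ) ↔ k ≤ (((τ₀⁻¹ * τ) a : Fin N) : ℕ) := by
    intro τ hτ a
    constructor
    · intro ha
      by_contra hcon
      push_neg at hcon
      have h2 := hfixlow τ hτ ((τ₀⁻¹ * τ) a) hcon
      have := (τ₀⁻¹ * τ).injective h2
      omega
    · intro ha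
      by_contra hcon
      push_neg at hcon
      rw [hfixlow τ hτ a hcon] at ha
      omega
  -- injection into permutations of the high part
  set f : Equiv.Perm (Fin N) → Equiv.Perm {a : Fin N // k ≤ (a : ℕ)} :=
    fun τ => if h : τ ∈ s then
      Equiv.Perm.subtypePerm (τ₀⁻¹ * τ) (fun a => (hfix τ h a).symm) else 1 with hf
  have hcard : s.card ≤ (Finset.univ : Finset (Equiv.Perm {a : Fin N // k ≤ (a : ℕ)})).card := by
    apply Finset.card_le_card_of_injOn f (fun _ _ => mem_univ _)
    intro τ₁ h₁ τ₂ h₂ heq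
    replace h₁ : τ₁ ∈ s := Finset.mem_coe.mp h₁
    replace h₂ : τ₂ ∈ s := Finset.mem_coe.mp h₂
    rw [hf] at heq
    dsimp only at heq
    rw [dif_pos h₁, dif_pos h₂] at heq
    have hext : τ₀⁻¹ * τ₁ = τ₀⁻¹ * τ₂ := by
      ext a
      rcases lt_or_ge ((a : ℕ)) k with ha | ha
      · rw [hfixlow τ₁ h₁ a ha, hfixlow τ₂ h₂ a ha]
      · have h3 := congrArg (fun (e : Equiv.Perm {a : Fin N // k ≤ (a : ℕ)}) => ((e ⟨a, ha⟩ : {a : Fin N // k ≤ (a : ℕ)}) : Fin N)) heq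
        simp only [Equiv.Perm.subtypePerm_apply] at h3
        exact congrArg Fin.val h3
    exact mul_left_cancel hext
  calc s.card ≤ _ := hcard
    _ = (N - k).factorial := by
        rw [Finset.card_univ, Fintype.card_perm, subtype_card_aux N k hk]

/-- Counting bound for the set `Φ(Z)` of consistent permutations: the number of
permutations `σ` of `{1,…,m−1}` such that for some permutation `σ'` of `{1,…,q−1}` every
`i ∈ {1,…,q−1}` satisfies `|σ⁻¹(i) − n_{σ'(i)}| ≤ ε` is at most
`((q−1)(2ε+1))^{q−1} · (m−q)!`. -/
theorem stmt_6 (m q : ℕ) (hq : 2 ≤ q) (hqm : q ≤ m) (ε : ℝ) (hε : 0 ≤ ε)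
    (n : Fin (q - 1) → ℝ) :
    (Set.ncard {σ : Equiv.Perm (Fin (m - 1)) |
        ∃ σ' : Equiv.Perm (Fin (q - 1)), ∀ i : Fin (q - 1),
          |((σ⁻¹ (Fin.castLE (by omega) i) : ℕ) : ℝ) + 1 - n (σ' i)| ≤ ε} : ℝ) ≤
      (((q : ℝ) - 1) * (2 * ε + 1)) ^ (q - 1) * ((m - q).factorial : ℝ) := by
    classical
  have hk : q - 1 ≤ m - 1 := by omega
  set S : Set (Equiv.Perm (Fin (m - 1))) := {σ : Equiv.Perm (Fin (m - 1)) |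
        ∃ σ' : Equiv.Perm (Fin (q - 1)), ∀ i : Fin (q - 1),
          |((σ⁻¹ (Fin.castLE (by omega) i) : ℕ) : ℝ) + 1 - n (σ' i)| ≤ ε} with hS
  have hfin : S.Finite := Set.toFinite S
  rw [Set.ncard_eq_toFinset_card' S]
  set Sfin : Finset (Equiv.Perm (Fin (m - 1))) := S.toFinset with hSfin
  set A : Finset (Fin (m - 1)) :=
    Finset.univ.filter (fun x : Fin (m - 1) => ∃ j, |((x : ℕ) : ℝ) + 1 - n j| ≤ ε) with hA
  -- Step 1: natural-number bound
  have step1 : Sfin.card ≤ A.card ^ (q - 1) * (m - q).factorial := by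
    have hmap : ∀ σ ∈ Sfin, (fun i : Fin (q - 1) => σ⁻¹ (Fin.castLE hk i)) ∈
        Fintype.piFinset (fun _ : Fin (q - 1) => A) := by
      intro σ hσ
      rw [hSfin, Set.mem_toFinset, hS] at hσ
      obtain ⟨σ', hσ'⟩ := hσ
      rw [Fintype.mem_piFinset]
      intro i
      rw [hA, Finset.mem_filter]
      exact ⟨Finset.mem_univ _, ⟨σ' i, hσ' i⟩⟩
    rw [Finset.card_eq_sum_card_fiberwise hmap]
    have hfiber : ∀ g ∈ Fintype.piFinset (fun _ : Fin (q - 1) => A),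
        (Sfin.filter (fun σ => (fun i : Fin (q - 1) => σ⁻¹ (Fin.castLE hk i)) = g)).card
          ≤ (m - q).factorial := by
      intro g _
      have hinj : (Sfin.filter (fun σ => (fun i : Fin (q - 1) => σ⁻¹ (Fin.castLE hk i)) = g)).card
          ≤ (Finset.univ.filter
            (fun τ : Equiv.Perm (Fin (m - 1)) => ∀ i, τ (Fin.castLE hk i) = g i)).card := by
        refine Finset.card_le_card_of_injOn (fun σ => σ⁻¹) ?_ ?_
        · intro σ hσ
          rw [Finset.mem_coe, Finset.mem_filter] at hσ
          rw [Finset.mem_coe, Finset.mem_filter]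
          exact ⟨Finset.mem_univ _, fun i => congrFun hσ.2 i⟩
        · intro σ₁ _ σ₂ _ h
          exact inv_injective h
      calc _ ≤ _ := hinj
        _ ≤ (m - 1 - (q - 1)).factorial := fiber_card_aux (m - 1) (q - 1) hk g
        _ = (m - q).factorial := by congr 1; omega
    calc ∑ g ∈ Fintype.piFinset (fun _ : Fin (q - 1) => A),
          (Sfin.filter (fun σ => (fun i : Fin (q - 1) => σ⁻¹ (Fin.castLE hk i)) = g)).card
        ≤ ∑ _g ∈ Fintype.piFinset (fun _ : Fin (q - 1) => A), (m - q).factorial :=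
          Finset.sum_le_sum hfiber
      _ = (Fintype.piFinset (fun _ : Fin (q - 1) => A)).card * (m - q).factorial := by
          rw [Finset.sum_const, smul_eq_mul]
      _ = A.card ^ (q - 1) * (m - q).factorial := by
          rw [Fintype.card_piFinset]
          simp
  -- Step 2: real bound on A.card
  have step2 : (A.card : ℝ) ≤ ((q : ℝ) - 1) * (2 * ε + 1) := by
    have hsub : A ⊆ Finset.univ.biUnion (fun j : Fin (q - 1) =>
        Finset.univ.filter (fun x : Fin (m - 1) => |((x : ℕ) : ℝ) + 1 - n j| ≤ ε)) := by
      intro x hx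
      rw [hA, Finset.mem_filter] at hx
      obtain ⟨_, j, hj⟩ := hx
      rw [Finset.mem_biUnion]
      exact ⟨j, Finset.mem_univ _, Finset.mem_filter.mpr ⟨Finset.mem_univ _, hj⟩⟩
    have h1 : A.card ≤ ∑ j : Fin (q - 1),
        (Finset.univ.filter (fun x : Fin (m - 1) => |((x : ℕ) : ℝ) + 1 - n j| ≤ ε)).card :=
      le_trans (Finset.card_le_card hsub) (Finset.card_biUnion_le)
    calc (A.card : ℝ) ≤ ∑ j : Fin (q - 1),
          ((Finset.univ.filter (fun x : Fin (m - 1) => |((x : ℕ) : ℝ) + 1 - n j| ≤ ε)).card : ℝ) := by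
            exact_mod_cast h1
      _ ≤ ∑ _j : Fin (q - 1), (2 * ε + 1) :=
          Finset.sum_le_sum (fun j _ => interval_card_aux (m - 1) (n j) ε hε)
      _ = ((q : ℝ) - 1) * (2 * ε + 1) := by
          rw [Finset.sum_const, Finset.card_univ, Fintype.card_fin, nsmul_eq_mul]
          congr 1
          have : (1 : ℕ) ≤ q := by omega
          push_cast [Nat.cast_sub this]
          ring
  -- combine
  calc (Sfin.card : ℝ) ≤ ((A.card ^ (q - 1) * (m - q).factorial : ℕ) : ℝ) := by
        exact_mod_cast step1
    _ = (A.card : ℝ) ^ (q - 1) * ((m - q).factorial : ℝ) := by push_cast; ring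
    _ ≤ (((q : ℝ) - 1) * (2 * ε + 1)) ^ (q - 1) * ((m - q).factorial : ℝ) := by
        apply mul_le_mul_of_nonneg_right _ (by positivity)
        exact pow_le_pow_left₀ (by positivity) step2 _
end
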